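/- arXiv:0802.0467 — 2 statements merged into one kernel-verified Lean document; each statement's English description precedes it below -/
import Mathlib

section
/- Let [x,y] be a geodesic and let γ be any path from x to y contained in the K-neighbourhood of [x,y]. For any point z, let p be a nearest point on [x,y] to z and let q be a nearest point on (the image of) γ to z. Then d(p,q) ≤ 3K + 6δ. -/
open Metric Set

/-- `G` is a geodesic segment from `x` to `y`: the image of an isometric embedding of
the interval `[0, dist x y]` sending the endpoints to `x` and `y`. -/
def IsGeodesic {X : Type*} [MetricSpace X] (G : Set X) (x y : X) : Prop :=
  ∃ f : ℝ → X, f 0 = x ∧ f (dist x y) = y ∧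
    (∀ s ∈ Set.Icc (0 : ℝ) (dist x y), ∀ t ∈ Set.Icc (0 : ℝ) (dist x y),
      dist (f s) (f t) = |s - t|) ∧
    f '' Set.Icc (0 : ℝ) (dist x y) = G

/-- The closed `K`-neighbourhood of a set `S`: all points within distance `K` of `S`. -/
def nbhd {X : Type*} [MetricSpace X] (K : ℝ) (S : Set X) : Set X :=
  {w | Metric.infDist w S ≤ K}

/-- The space is geodesic: any two points are joined by a geodesic segment. -/
def GeodesicSpace (X : Type*) [MetricSpace X] : Prop :=
  ∀ x y : X, ∃ G : Set X, IsGeodesic G x y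

/-- Every geodesic triangle is `δ`-slim: each side is contained in the
`δ`-neighbourhood of the union of the other two sides. -/
def SlimTriangles (δ : ℝ) (X : Type*) [MetricSpace X] : Prop :=
  ∀ (x y z : X) (Gxy Gyz Gzx : Set X),
    IsGeodesic Gxy x y → IsGeodesic Gyz y z → IsGeodesic Gzx z x →
    Gxy ⊆ nbhd δ (Gyz ∪ Gzx)

/-- `p` is a nearest point on `S` to `z`. -/
def NearestPoint {X : Type*} [MetricSpace X] (S : Set X) (z p : X) : Prop :=
  p ∈ S ∧ dist z p = Metric.infDist z S

/-- The halfspace `H(a,b)`: points at least as close to `b` as to `a`. -/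
def Halfspace {X : Type*} [MetricSpace X] (a b : X) : Set X :=
  {w | dist w b ≤ dist w a}

section Helpers
variable {X : Type*} [MetricSpace X]

lemma geo_contOn {f : ℝ → X} {L : ℝ}
    (hiso : ∀ s ∈ Set.Icc (0:ℝ) L, ∀ t ∈ Set.Icc (0:ℝ) L, dist (f s) (f t) = |s - t|) :
    ContinuousOn f (Set.Icc 0 L) := by
  have : LipschitzOnWith 1 f (Set.Icc 0 L) := by
    apply LipschitzOnWith.of_dist_le_mul
    intro a ha b hb
    rw [hiso a ha b hb, Real.dist_eq]
    simp
  exact this.continuousOn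

lemma IsGeodesic.compact {G : Set X} {a b : X} (h : IsGeodesic G a b) : IsCompact G := by
  obtain ⟨f, h0, hL, hiso, himg⟩ := h
  rw [← himg]
  exact isCompact_Icc.image_of_continuousOn (geo_contOn hiso)

lemma IsGeodesic.left_mem {G : Set X} {a b : X} (h : IsGeodesic G a b) : a ∈ G := by
  obtain ⟨f, h0, hL, hiso, himg⟩ := h
  rw [← himg]
  exact ⟨0, ⟨le_refl 0, dist_nonneg⟩, h0⟩

lemma IsGeodesic.right_mem {G : Set X} {a b : X} (h : IsGeodesic G a b) : b ∈ G := by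
  obtain ⟨f, h0, hL, hiso, himg⟩ := h
  rw [← himg]
  exact ⟨dist a b, ⟨dist_nonneg, le_refl _⟩, hL⟩

lemma IsGeodesic.nonempty {G : Set X} {a b : X} (h : IsGeodesic G a b) : G.Nonempty :=
  ⟨a, h.left_mem⟩

lemma IsGeodesic.dist_add {G : Set X} {a b m : X} (h : IsGeodesic G a b) (hm : m ∈ G) :
    dist a m + dist m b = dist a b := by
  obtain ⟨f, h0, hL, hiso, himg⟩ := h
  rw [← himg] at hm
  obtain ⟨u, hu, hum⟩ := hm
  have h1 : dist a m = u := by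
    rw [← h0, ← hum, hiso 0 ⟨le_refl 0, dist_nonneg⟩ u hu, zero_sub, abs_neg,
      abs_of_nonneg hu.1]
  have h2 : dist m b = dist a b - u := by
    have h3 := hiso u hu (dist a b) ⟨dist_nonneg, le_refl _⟩
    rw [hum, hL] at h3
    rw [h3, abs_of_nonpos (by linarith [hu.2])]
    ring
  linarith

lemma IsGeodesic.preconnected {G : Set X} {a b : X} (h : IsGeodesic G a b) :
    IsPreconnected G := by
  obtain ⟨f, h0, hL, hiso, himg⟩ := h
  rw [← himg]
  exact isPreconnected_Icc.image f (geo_contOn hiso)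

lemma exists_near {S : Set X} (hc : IsCompact S) (hne : S.Nonempty) {w : X} {c : ℝ}
    (h : infDist w S ≤ c) : ∃ v ∈ S, dist w v ≤ c := by
  obtain ⟨v, hv, hd⟩ := hc.exists_infDist_eq_dist hne w
  exact ⟨v, hv, by rw [← hd]; exact h⟩

lemma IsGeodesic.subseg {G : Set X} {a b : X} (h : IsGeodesic G a b) {p q : X}
    (hp : p ∈ G) (hq : q ∈ G) : ∃ G', G' ⊆ G ∧ IsGeodesic G' p q := by
  obtain ⟨f, h0, hL, hiso, himg⟩ := h
  rw [← himg] at hp hq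
  obtain ⟨u, hu, hup⟩ := hp
  obtain ⟨v, hv, hvq⟩ := hq
  have hd : dist p q = |u - v| := by rw [← hup, ← hvq, hiso u hu v hv]
  rcases le_total u v with hle | hle
  · have hd' : dist p q = v - u := by rw [hd, abs_of_nonpos (by linarith)]; ring
    refine ⟨f '' Set.Icc u v, ?_, fun w => f (u + w), ?_, ?_, ?_, ?_⟩
    · rw [← himg]; exact Set.image_mono (f := f) (Set.Icc_subset_Icc hu.1 hv.2)
    · simpa using hup
    · rw [hd']; simpa using hvq
    · intro s hs t ht
      rw [hd'] at hs ht
      rw [hiso (u + s) ⟨by linarith [hs.1, hu.1], by linarith [hs.2, hv.2]⟩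
        (u + t) ⟨by linarith [ht.1, hu.1], by linarith [ht.2, hv.2]⟩]
      congr 1; ring
    · rw [hd']
      have : (fun w => u + w) '' Set.Icc 0 (v - u) = Set.Icc u v := by
        rw [Set.image_const_add_Icc]; congr 1 <;> ring
      rw [← Set.image_image f (fun w => u + w), this]
  · have hd' : dist p q = u - v := by rw [hd, abs_of_nonneg (by linarith)]
    refine ⟨f '' Set.Icc v u, ?_, fun w => f (u - w), ?_, ?_, ?_, ?_⟩
    · rw [← himg]; exact Set.image_mono (f := f) (Set.Icc_subset_Icc hv.1 hu.2)
    · simpa using hup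
    · rw [hd']; simpa using hvq
    · intro s hs t ht
      rw [hd'] at hs ht
      rw [hiso (u - s) ⟨by linarith [hs.2, hv.1], by linarith [hs.1, hu.2]⟩
        (u - t) ⟨by linarith [ht.2, hv.1], by linarith [ht.1, hu.2]⟩]
      rw [show u - s - (u - t) = -(s - t) by ring, abs_neg]
    · rw [hd']
      have : (fun w => u - w) '' Set.Icc 0 (u - v) = Set.Icc v u := by
        rw [Set.image_const_sub_Icc]; congr 1 <;> ring
      rw [← Set.image_image f (fun w => u - w), this]

lemma geo_connect {G : Set X} {a b : X} (h : IsGeodesic G a b) {A B : Set X}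
    (hA : IsClosed A) (hB : IsClosed B) (hcov : ∀ u ∈ G, u ∈ A ∪ B)
    (ha : a ∈ A) (hb : b ∈ B) : ∃ m ∈ G, m ∈ A ∧ m ∈ B := by
  have hpre := h.preconnected
  obtain ⟨m, hmG, hmA, hmB⟩ := (isPreconnected_closed_iff.mp hpre) A B hA hB
    (fun u hu => hcov u hu) ⟨a, h.left_mem, ha⟩ ⟨b, h.right_mem, hb⟩
  exact ⟨m, hmG, hmA, hmB⟩

lemma closed_near (S : Set X) (c : ℝ) : IsClosed {u : X | infDist u S ≤ c} :=
  isClosed_le (continuous_infDist_pt S) continuous_const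

end Helpers


/-- Let [x,y] be a geodesic and γ any path from x to y contained in the
K-neighbourhood of [x,y]. For any point z, let p be a nearest point on [x,y] to z and q
a nearest point on the image of γ to z. Then d(p,q) ≤ 3K + 6δ. -/
theorem stmt_6 {X : Type*} [MetricSpace X] (δ : ℝ) (hδ : 0 ≤ δ)
    (hGeo : GeodesicSpace X) (hyp : SlimTriangles δ X)
    (x y : X) (Gxy : Set X) (hGxy : IsGeodesic Gxy x y)
    (K : ℝ) (f : ℝ → X) (s t : ℝ) (hst : s ≤ t)
    (hcont : ContinuousOn f (Set.Icc s t)) (hfs : f s = x) (hft : f t = y)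
    (hnear : f '' Set.Icc s t ⊆ nbhd K Gxy)
    (z p q : X) (hp : NearestPoint Gxy z p) (hq : NearestPoint (f '' Set.Icc s t) z q) :
    dist p q ≤ 3 * K + 6 * δ := by
  obtain ⟨hpG, hpd⟩ := hp
  obtain ⟨hqG, hqd⟩ := hq
  have hGc := hGxy.compact
  have hGne : Gxy.Nonempty := hGxy.nonempty
  have hK0 : 0 ≤ K := by
    have hxmem : x ∈ f '' Set.Icc s t := ⟨s, ⟨le_refl s, hst⟩, hfs⟩
    exact le_trans infDist_nonneg (hnear hxmem)
  have hpmin : ∀ v ∈ Gxy, dist z p ≤ dist z v := fun v hv => by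
    rw [hpd]; exact infDist_le_dist_of_mem hv
  have hqmin : ∀ v ∈ f '' Set.Icc s t, dist z q ≤ dist z v := fun v hv => by
    rw [hqd]; exact infDist_le_dist_of_mem hv
  obtain ⟨p'', hp''G, hp''d⟩ := exists_near hGc hGne (hnear hqG)
  -- Lemma W : dist z q ≤ dist z p + 2K
  have hW : dist z q ≤ dist z p + 2 * K := by
    have hG2 := hGxy
    obtain ⟨g, hg0, hgL, hgiso, hgim⟩ := hG2
    have hpmem : p ∈ g '' Set.Icc 0 (dist x y) := by rw [hgim]; exact hpG
    obtain ⟨a, haI, hap⟩ := hpmem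
    have hcont' : ContinuousOn (fun u => dist (f u) x) (Set.Icc s t) :=
      (continuous_id.dist continuous_const).comp_continuousOn hcont
    have hmem : a ∈ Set.Icc (dist (f s) x) (dist (f t) x) := by
      rw [hfs, hft, dist_self, dist_comm y x]
      exact haI
    obtain ⟨u₀, hu₀, hwu₀⟩ := intermediate_value_Icc hst hcont' hmem
    have hwu : dist (f u₀) x = a := hwu₀
    have hwmem : f u₀ ∈ f '' Set.Icc s t := ⟨u₀, hu₀, rfl⟩
    obtain ⟨p', hp'G, hp'w⟩ := exists_near hGc hGne (hnear hwmem)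
    have hp'mem : p' ∈ g '' Set.Icc 0 (dist x y) := by rw [hgim]; exact hp'G
    obtain ⟨b, hbI, hbp⟩ := hp'mem
    have hbx : dist p' x = b := by
      rw [← hbp, ← hg0, dist_comm, hgiso 0 ⟨le_refl 0, dist_nonneg⟩ b hbI, zero_sub,
        abs_neg, abs_of_nonneg hbI.1]
    have h1 : dist p p' = |a - b| := by rw [← hap, ← hbp, hgiso a haI b hbI]
    have h2 : |b - a| ≤ K := by
      have h3 := abs_dist_sub_le p' (f u₀) x
      rw [hbx, hwu] at h3
      exact le_trans h3 (by rw [dist_comm]; exact hp'w)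
    have h4 : dist p p' ≤ K := by rw [h1, abs_sub_comm]; exact h2
    have h5 := hqmin (f u₀) hwmem
    have h6 := dist_triangle4 z p p' (f u₀)
    have h7 : dist p' (f u₀) = dist (f u₀) p' := dist_comm _ _
    linarith [hp'w]
  obtain ⟨Gzp, hGzp⟩ := hGeo z p
  have hA : dist z p ≤ dist z p'' := hpmin p'' hp''G
  obtain ⟨Gpp'', hsub, hgeod⟩ := hGxy.subseg hpG hp''G
  obtain ⟨Gp''z, hGp''z⟩ := hGeo p'' z
  have hT2 := hyp p'' z p Gp''z Gzp Gpp'' hGp''z hGzp hgeod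
  rcases le_total K (2 * δ) with hK2 | hK2
  · -- case K ≤ 2δ : projection lemma argument, bound 4K + 4δ
    have hcov : ∀ u ∈ Gp''z,
        u ∈ {u : X | infDist u Gpp'' ≤ δ} ∪ {u : X | infDist u Gzp ≤ δ} := by
      intro u hu
      obtain ⟨v, hv, hvd⟩ := exists_near (hGzp.compact.union hgeod.compact)
        ⟨z, Set.mem_union_left _ hGzp.left_mem⟩ (hT2 hu)
      cases hv with
      | inl h => exact Or.inr (le_trans (infDist_le_dist_of_mem h) hvd)
      | inr h => exact Or.inl (le_trans (infDist_le_dist_of_mem h) hvd)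
    obtain ⟨m, hmG, hmB1, hmA1⟩ := geo_connect hGp''z (closed_near Gpp'' δ)
      (closed_near Gzp δ) hcov
      (show infDist p'' Gpp'' ≤ δ by rw [infDist_zero_of_mem hgeod.right_mem]; exact hδ)
      (show infDist z Gzp ≤ δ by rw [infDist_zero_of_mem hGzp.left_mem]; exact hδ)
    obtain ⟨a1, ha1G, ha1d⟩ := exists_near hGzp.compact hGzp.nonempty hmA1
    obtain ⟨b1, hb1G, hb1d⟩ := exists_near hgeod.compact hgeod.nonempty hmB1
    have f1 : dist p'' m + dist m z = dist p'' z := hGp''z.dist_add hmG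
    have f2 : dist z a1 + dist a1 p = dist z p := hGzp.dist_add ha1G
    have f4 : dist z p ≤ dist z b1 := hpmin b1 (hsub hb1G)
    have f5 : dist z b1 ≤ dist z m + dist m b1 := dist_triangle _ _ _
    have f6 : dist z m ≤ dist z a1 + dist a1 m := dist_triangle _ _ _
    have c6 : dist a1 m = dist m a1 := dist_comm _ _
    have f7 : dist p m ≤ dist p a1 + dist a1 m := dist_triangle _ _ _
    have c7 : dist p a1 = dist a1 p := dist_comm _ _
    have f8 : dist p p'' ≤ dist p m + dist m p'' := dist_triangle _ _ _
    have c8 : dist m p'' = dist p'' m := dist_comm _ _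
    have c1 : dist m z = dist z m := dist_comm _ _
    have f9 : dist z p'' ≤ dist z q + dist q p'' := dist_triangle _ _ _
    have c9 : dist p'' z = dist z p'' := dist_comm _ _
    have f10 : dist p q ≤ dist p p'' + dist p'' q := dist_triangle _ _ _
    have c10 : dist p'' q = dist q p'' := dist_comm _ _
    linarith [ha1d, hb1d, hp''d, hW]
  · -- case 2δ ≤ K : quadrilateral argument
    obtain ⟨Gzq, hGzq⟩ := hGeo z q
    obtain ⟨Gqp'', hGqp''⟩ := hGeo q p''
    have hT1 := hyp z q p'' Gzq Gqp'' Gp''z hGzq hGqp'' hGp''z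
    have hcov : ∀ u ∈ Gzq,
        u ∈ {u : X | infDist u Gzp ≤ 2*δ} ∪ {u : X | infDist u (Gpp'' ∪ Gqp'') ≤ 2*δ} := by
      intro u hu
      obtain ⟨v, hv, hvd⟩ := exists_near (hGqp''.compact.union hGp''z.compact)
        ⟨q, Set.mem_union_left _ hGqp''.left_mem⟩ (hT1 hu)
      cases hv with
      | inl h =>
        exact Or.inr (le_trans (infDist_le_dist_of_mem (Set.mem_union_right _ h))
          (by linarith))
      | inr h =>
        obtain ⟨v2, hv2, hv2d⟩ := exists_near (hGzp.compact.union hgeod.compact)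
          ⟨z, Set.mem_union_left _ hGzp.left_mem⟩ (hT2 h)
        have hd2 : dist u v2 ≤ 2*δ := le_trans (dist_triangle u v v2) (by linarith)
        cases hv2 with
        | inl h2 => exact Or.inl (le_trans (infDist_le_dist_of_mem h2) hd2)
        | inr h2 =>
          exact Or.inr (le_trans (infDist_le_dist_of_mem (Set.mem_union_left _ h2)) hd2)
    obtain ⟨m, hmG, hmA2, hmB2⟩ := geo_connect hGzq (closed_near Gzp (2*δ))
      (closed_near (Gpp'' ∪ Gqp'') (2*δ)) hcov
      (show infDist z Gzp ≤ 2*δ by rw [infDist_zero_of_mem hGzp.left_mem]; linarith)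
      (show infDist q (Gpp'' ∪ Gqp'') ≤ 2*δ by
        rw [infDist_zero_of_mem (Set.mem_union_right _ hGqp''.left_mem)]; linarith)
    obtain ⟨a2, ha2G, ha2d⟩ := exists_near hGzp.compact hGzp.nonempty hmA2
    obtain ⟨c, hcG, hcd⟩ := exists_near (hgeod.compact.union hGqp''.compact)
      ⟨p, Set.mem_union_left _ hgeod.left_mem⟩ hmB2
    have g1 : dist z m + dist m q = dist z q := hGzq.dist_add hmG
    have g2 : dist z a2 + dist a2 p = dist z p := hGzp.dist_add ha2G
    have g5 : dist z m ≤ dist z a2 + dist a2 m := dist_triangle _ _ _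
    have c5 : dist a2 m = dist m a2 := dist_comm _ _
    have c7 : dist p a2 = dist a2 p := dist_comm _ _
    cases hcG with
    | inl hc1 =>
      have g3 : dist z p ≤ dist z c := hpmin c (hsub hc1)
      have g4 : dist z c ≤ dist z m + dist m c := dist_triangle _ _ _
      have g6 : dist p q ≤ dist p m + dist m q := dist_triangle _ _ _
      have g7 : dist p m ≤ dist p a2 + dist a2 m := dist_triangle _ _ _
      linarith [ha2d, hcd, hW]
    | inr hc2 =>
      have g3 : dist q c + dist c p'' = dist q p'' := hGqp''.dist_add hc2
      have g4 : dist z p'' ≤ dist z c + dist c p'' := dist_triangle _ _ _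
      have g6 : dist z c ≤ dist z m + dist m c := dist_triangle _ _ _
      have t1 : dist p q ≤ dist p a2 + dist a2 q := dist_triangle _ _ _
      have t2 : dist a2 q ≤ dist a2 m + dist m c + dist c q := dist_triangle4 _ _ _ _
      have c8 : dist c q = dist q c := dist_comm _ _
      linarith [ha2d, hcd, hp''d, hA]
end

section
/- There are constants K₄ and K₅ depending only on δ (one may take K₄ = 114δ and K₅ = 24δ) such that: for any geodesic [x,y] with ‖x‖ and ‖y‖ both at least 2·dist(1,[x,y]) + K₄, and for any point z with ‖z‖ ≥ 2·dist(1,[x,y]) + K₅, the halfspace H(1,z) intersects at most one of the halfspaces H(1,x) and H(1,y). -/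
open Metric Set

noncomputable def gp {X : Type*} [MetricSpace X] (p a b : X) : ℝ :=
  (dist p a + dist p b - dist a b) / 2

lemma gp_nonneg {X : Type*} [MetricSpace X] (p a b : X) : 0 ≤ gp p a b := by
  have := dist_triangle a p b
  unfold gp
  rw [dist_comm p a] at *
  linarith

lemma gp_le_dist_left {X : Type*} [MetricSpace X] (p a b : X) : gp p a b ≤ dist p a := by
  have := dist_triangle p b a
  unfold gp
  linarith [dist_triangle p a b]

lemma mem_left {X : Type*} [MetricSpace X] {G : Set X} {x y : X}
    (h : IsGeodesic G x y) : x ∈ G := by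
  obtain ⟨f, h0, hd, hiso, himg⟩ := h
  rw [← himg]
  exact ⟨0, ⟨le_refl _, dist_nonneg⟩, h0⟩

lemma exists_point {X : Type*} [MetricSpace X] {G : Set X} {x y : X}
    (h : IsGeodesic G x y) {t : ℝ} (ht : t ∈ Set.Icc 0 (dist x y)) :
    ∃ p ∈ G, dist x p = t ∧ dist p y = dist x y - t := by
  obtain ⟨f, h0, hd, hiso, himg⟩ := h
  have h1 : dist x (f t) = t := by
    rw [← h0, hiso 0 ⟨le_refl _, dist_nonneg⟩ t ht, abs_of_nonpos (by linarith [ht.1])]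
    linarith
  have h2 : dist (f t) y = dist x y - t := by
    have := hiso t ht (dist x y) ⟨dist_nonneg, le_refl _⟩
    rw [hd] at this
    rw [this, abs_of_nonpos (by linarith [ht.2])]; ring
  exact ⟨f t, by rw [← himg]; exact ⟨t, ht, rfl⟩, h1, h2⟩

lemma dist_add_of_mem {X : Type*} [MetricSpace X] {G : Set X} {x y : X}
    (h : IsGeodesic G x y) {p : X} (hp : p ∈ G) :
    dist x p + dist p y = dist x y := by
  obtain ⟨f, h0, hd, hiso, himg⟩ := h
  rw [← himg] at hp
  obtain ⟨t, ht, rfl⟩ := hp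
  have h1 : dist x (f t) = t := by
    rw [← h0, hiso 0 ⟨le_refl _, dist_nonneg⟩ t ht, abs_of_nonpos (by linarith [ht.1])]
    linarith
  have h2 : dist (f t) y = dist x y - t := by
    have := hiso t ht (dist x y) ⟨dist_nonneg, le_refl _⟩
    rw [hd] at this
    rw [this, abs_of_nonpos (by linarith [ht.2])]; ring
  rw [h1, h2]; ring

lemma isGeodesic_symm {X : Type*} [MetricSpace X] {G : Set X} {x y : X}
    (h : IsGeodesic G x y) : IsGeodesic G y x := by
  obtain ⟨f, h0, hd, hiso, himg⟩ := h
  have hc : dist y x = dist x y := dist_comm y x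
  refine ⟨fun t => f (dist x y - t), by simpa using hd, by rw [hc]; simpa using h0, ?_, ?_⟩
  · intro s hs t ht
    rw [hc] at hs ht
    rw [hiso _ ⟨by linarith [hs.2], by linarith [hs.1]⟩ _ ⟨by linarith [ht.2], by linarith [ht.1]⟩]
    rw [abs_sub_comm]; ring_nf
  · rw [← himg, hc]
    ext p
    constructor
    · rintro ⟨t, ht, rfl⟩; exact ⟨dist x y - t, ⟨by linarith [ht.2], by linarith [ht.1]⟩, rfl⟩
    · rintro ⟨t, ht, rfl⟩
      exact ⟨dist x y - t, ⟨by linarith [ht.2], by linarith [ht.1]⟩, by ring_nf⟩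

lemma gp_le_dist_mem {X : Type*} [MetricSpace X] {G : Set X} {x y : X}
    (h : IsGeodesic G x y) {p : X} (hp : p ∈ G) (w : X) :
    gp w x y ≤ dist w p := by
  have hadd := dist_add_of_mem h hp
  have h2 : dist w x ≤ dist w p + dist x p := by
    rw [dist_comm x p]; exact dist_triangle w p x
  have h3 : dist w y ≤ dist w p + dist p y := dist_triangle w p y
  unfold gp; linarith

lemma gp_le_infDist {X : Type*} [MetricSpace X] {G : Set X} {x y : X}
    (h : IsGeodesic G x y) (w : X) : gp w x y ≤ Metric.infDist w G := by
  by_contra hlt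
  push_neg at hlt
  obtain ⟨p, hp, hd⟩ := (Metric.infDist_lt_iff ⟨x, mem_left h⟩).1 hlt
  exact absurd (gp_le_dist_mem h hp w) (by linarith)







/-- Lemma D: distance to a geodesic is at most the Gromov product plus 2δ. -/
lemma infDist_le_gp {X : Type*} [MetricSpace X] {δ : ℝ} (hδ : 0 ≤ δ)
    (hGeo : GeodesicSpace X) (hyp : SlimTriangles δ X)
    {G : Set X} {a c : X} (hG : IsGeodesic G a c) (w : X) :
    Metric.infDist w G ≤ gp w a c + 2 * δ := by
  apply le_of_forall_pos_le_add
  intro ε hε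
  obtain ⟨Gcw, hGcw⟩ := hGeo c w
  obtain ⟨Gwa, hGwa⟩ := hGeo w a
  have hslim := hyp a c w G Gcw Gwa hG hGcw hGwa
  set t := gp a c w with htdef
  have ht0 : 0 ≤ t := gp_nonneg a c w
  have ht1 : t ≤ dist a c := gp_le_dist_left a c w
  obtain ⟨p, hpG, hap, hpc⟩ := exists_point hG ⟨ht0, ht1⟩
  have hpnb : Metric.infDist p (Gcw ∪ Gwa) ≤ δ := hslim hpG
  have hne : (Gcw ∪ Gwa).Nonempty := ⟨c, Or.inl (mem_left hGcw)⟩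
  obtain ⟨q, hq, hpq⟩ := (Metric.infDist_lt_iff hne).1
    (lt_of_le_of_lt hpnb (show δ < δ + ε / 2 by linarith))
  have hwp : Metric.infDist w G ≤ dist w p := Metric.infDist_le_dist_of_mem hpG
  have hwq : dist w p ≤ dist w q + dist q p := dist_triangle w q p
  have hqp : dist q p = dist p q := dist_comm q p
  have hgoal : dist w p ≤ gp w a c + 2 * (δ + ε / 2) := by
    rcases hq with hq | hq
    · -- q on geodesic from c to w
      have hadd := dist_add_of_mem hGcw hq
      have h1 : dist c p ≤ dist c q + dist q p := dist_triangle c q p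
      have h2 : dist c p = dist a c - t := by rw [dist_comm]; exact hpc
      have h3 : dist w q = dist q w := dist_comm w q
      unfold gp at htdef ⊢
      have e1 : dist w a = dist a w := dist_comm w a
      have e2 : dist w c = dist c w := dist_comm w c
      linarith
    · -- q on geodesic from w to a
      have hadd := dist_add_of_mem hGwa hq
      have h1 : dist a p ≤ dist a q + dist q p := dist_triangle a q p
      have h3 : dist q a = dist a q := dist_comm q a
      unfold gp at htdef ⊢
      have e1 : dist w a = dist a w := dist_comm w a
      have e2 : dist w c = dist c w := dist_comm w c
      linarith
  linarith

/-- Lemma A: distance to union of two sides bounds distance to third side. -/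
lemma min_infDist_le {X : Type*} [MetricSpace X] {δ : ℝ}
    (hyp : SlimTriangles δ X)
    {a b c : X} {Gab Gbc Gca : Set X}
    (hGab : IsGeodesic Gab a b) (hGbc : IsGeodesic Gbc b c) (hGca : IsGeodesic Gca c a)
    (w : X) :
    min (Metric.infDist w Gbc) (Metric.infDist w Gca) ≤ Metric.infDist w Gab + δ := by
  apply le_of_forall_pos_le_add
  intro ε hε
  have hne : Gab.Nonempty := ⟨a, mem_left hGab⟩
  obtain ⟨p, hpG, hwp⟩ := (Metric.infDist_lt_iff hne).1
    (lt_add_of_pos_right (Metric.infDist w Gab) (by linarith : (0:ℝ) < ε / 2))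
  have hpnb : Metric.infDist p (Gbc ∪ Gca) ≤ δ :=
    hyp a b c Gab Gbc Gca hGab hGbc hGca hpG
  have hne2 : (Gbc ∪ Gca).Nonempty := ⟨b, Or.inl (mem_left hGbc)⟩
  obtain ⟨q, hq, hpq⟩ := (Metric.infDist_lt_iff hne2).1
    (lt_of_le_of_lt hpnb (show δ < δ + ε / 2 by linarith))
  have hwq : dist w q ≤ dist w p + dist p q := dist_triangle w p q
  rcases hq with hq | hq
  · have := Metric.infDist_le_dist_of_mem (x := w) hq
    calc min (Metric.infDist w Gbc) (Metric.infDist w Gca) ≤ Metric.infDist w Gbc :=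
          min_le_left _ _
      _ ≤ dist w q := this
      _ ≤ Metric.infDist w Gab + δ + ε := by linarith
  · have := Metric.infDist_le_dist_of_mem (x := w) hq
    calc min (Metric.infDist w Gbc) (Metric.infDist w Gca) ≤ Metric.infDist w Gca :=
          min_le_right _ _
      _ ≤ dist w q := this
      _ ≤ Metric.infDist w Gab + δ + ε := by linarith

/-- Four-point inequality from slim triangles. -/
lemma fourpt {X : Type*} [MetricSpace X] {δ : ℝ} (hδ : 0 ≤ δ)
    (hGeo : GeodesicSpace X) (hyp : SlimTriangles δ X) (e a b c : X) :
    min (gp e a b) (gp e b c) - 3 * δ ≤ gp e a c := by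
  obtain ⟨Gac, hGac⟩ := hGeo a c
  obtain ⟨Gcb, hGcb⟩ := hGeo c b
  obtain ⟨Gba, hGba⟩ := hGeo b a
  have hD : Metric.infDist e Gac ≤ gp e a c + 2 * δ := infDist_le_gp hδ hGeo hyp hGac e
  have hA : min (Metric.infDist e Gcb) (Metric.infDist e Gba) ≤ Metric.infDist e Gac + δ :=
    min_infDist_le hyp hGac hGcb hGba e
  have h1 : gp e b c ≤ Metric.infDist e Gcb := gp_le_infDist (isGeodesic_symm hGcb) e
  have h2 : gp e a b ≤ Metric.infDist e Gba := gp_le_infDist (isGeodesic_symm hGba) e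
  have : min (gp e b c) (gp e a b) ≤ min (Metric.infDist e Gcb) (Metric.infDist e Gba) :=
    min_le_min h1 h2
  rw [min_comm] at this
  linarith

lemma gp_comm {X : Type*} [MetricSpace X] (p a b : X) : gp p a b = gp p b a := by
  unfold gp; rw [dist_comm a b]; ring

/-- There are constants K₄ and K₅ depending only on δ such that for any
geodesic [x,y] with ‖x‖ and ‖y‖ at least 2·dist(1,[x,y]) + K₄, and any z with
‖z‖ ≥ 2·dist(1,[x,y]) + K₅, the halfspace H(1,z) intersects at most one of H(1,x)
and H(1,y). -/
theorem stmt_10 {X : Type*} [MetricSpace X] (δ : ℝ) (hδ : 0 ≤ δ)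
    (hGeo : GeodesicSpace X) (hyp : SlimTriangles δ X) (e : X) :
    ∃ K₄ K₅ : ℝ,
      ∀ (x y z : X) (Gxy : Set X), IsGeodesic Gxy x y →
        2 * Metric.infDist e Gxy + K₄ ≤ dist e x →
        2 * Metric.infDist e Gxy + K₄ ≤ dist e y →
        2 * Metric.infDist e Gxy + K₅ ≤ dist e z →
        ¬ ((Halfspace e z ∩ Halfspace e x).Nonempty ∧
           (Halfspace e z ∩ Halfspace e y).Nonempty) := by
  refine ⟨12 * δ + 1, 12 * δ + 1, ?_⟩
  intro x y z Gxy hGxy hx hy hz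
  rintro ⟨⟨w₁, hw₁z, hw₁x⟩, ⟨w₂, hw₂z, hw₂y⟩⟩
  have hw₁z' : dist w₁ z ≤ dist w₁ e := hw₁z
  have hw₁x' : dist w₁ x ≤ dist w₁ e := hw₁x
  have hw₂z' : dist w₂ z ≤ dist w₂ e := hw₂z
  have hw₂y' : dist w₂ y ≤ dist w₂ e := hw₂y
  set r := Metric.infDist e Gxy with hr
  -- Gromov product lower bounds from halfspace membership
  have A1 : dist e x / 2 ≤ gp e x w₁ := by
    unfold gp
    have e1 : dist x w₁ = dist w₁ x := dist_comm x w₁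
    have e2 : dist e w₁ = dist w₁ e := dist_comm e w₁
    linarith
  have A2 : dist e z / 2 ≤ gp e w₁ z := by
    unfold gp
    have e2 : dist e w₁ = dist w₁ e := dist_comm e w₁
    linarith
  have B1 : dist e y / 2 ≤ gp e y w₂ := by
    unfold gp
    have e1 : dist y w₂ = dist w₂ y := dist_comm y w₂
    have e2 : dist e w₂ = dist w₂ e := dist_comm e w₂
    linarith
  have B2 : dist e z / 2 ≤ gp e w₂ z := by
    unfold gp
    have e2 : dist e w₂ = dist w₂ e := dist_comm e w₂
    linarith
  have F1 := fourpt hδ hGeo hyp e x w₁ z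
  have F2 := fourpt hδ hGeo hyp e y w₂ z
  have F3 := fourpt hδ hGeo hyp e x z y
  have top : gp e x y ≤ r := gp_le_infDist hGxy e
  have m1 : r + 6 * δ + 1 / 2 ≤ min (gp e x w₁) (gp e w₁ z) :=
    le_min (by linarith) (by linarith)
  have m2 : r + 6 * δ + 1 / 2 ≤ min (gp e y w₂) (gp e w₂ z) :=
    le_min (by linarith) (by linarith)
  have hxz : r + 3 * δ + 1 / 2 ≤ gp e x z := by linarith
  have hyz : r + 3 * δ + 1 / 2 ≤ gp e y z := by linarith
  have hzy : gp e z y = gp e y z := gp_comm e z y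
  have m3 : r + 3 * δ + 1 / 2 ≤ min (gp e x z) (gp e z y) :=
    le_min (by linarith) (by rw [hzy]; linarith)
  linarith
end
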